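/- Let c ≥ 1 be an integer and consider a Second-Price Ad Auctions instance with m keywords in which every bidder's bid on every keyword is at most 1/c of its budget. For each keyword u let s_u denote the second-highest bid on u. Then the optimal second-price allocation has value at most Σ_u s_u, and the allocation that runs second-price auctions on the c keywords with the largest s_u values (with the top two bidders participating in each) achieves profit at least Σ over those c keywords of s_u ≥ (c/m)·Σ_u s_u; hence this is an m/c-approximation. -/

import Mathlib

/-- Remaining budgets in a Second-Price Ad Auctions run after `t` keywords:
when keyword `u` is allocated to the pair `(v₁, v₂)`, the winner `v₁` pays the
budget-truncated bid of `v₂`, which is deducted from `v₁`'s budget. -/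
noncomputable def budgetRem (m : ℕ) {V : Type*} [DecidableEq V]
    (b : Fin m → V → ℝ) (B : V → ℝ) (alloc : Fin m → Option (V × V)) : ℕ → V → ℝ
  | 0 => B
  | t + 1 => fun v =>
    if h : t < m then
      match alloc ⟨t, h⟩ with
      | some p =>
        if v = p.1 then
          budgetRem m b B alloc t v - min (b ⟨t, h⟩ p.2) (budgetRem m b B alloc t p.2)
        else budgetRem m b B alloc t v
      | none => budgetRem m b B alloc t v
    else budgetRem m b B alloc t v

/-- The price charged for keyword `t`: the budget-truncated bid of the selected
second-price bidder (0 if the keyword is not allocated). -/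
noncomputable def price2PAA (m : ℕ) {V : Type*} [DecidableEq V]
    (b : Fin m → V → ℝ) (B : V → ℝ) (alloc : Fin m → Option (V × V)) (t : Fin m) : ℝ :=
  match alloc t with
  | some p => min (b t p.2) (budgetRem m b B alloc t.val p.2)
  | none => 0

/-- Total revenue of a Second-Price Ad Auctions allocation. -/
noncomputable def value2PAA (m : ℕ) {V : Type*} [DecidableEq V]
    (b : Fin m → V → ℝ) (B : V → ℝ) (alloc : Fin m → Option (V × V)) : ℝ :=
  ∑ t : Fin m, price2PAA m b B alloc t

/-- Feasibility: the two selected bidders are distinct and the winner's truncated bid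
is at least the second-price bidder's truncated bid. -/
def Feasible2PAA (m : ℕ) {V : Type*} [DecidableEq V]
    (b : Fin m → V → ℝ) (B : V → ℝ) (alloc : Fin m → Option (V × V)) : Prop :=
  ∀ (t : Fin m) (p : V × V), alloc t = some p →
    p.1 ≠ p.2 ∧
    min (b t p.2) (budgetRem m b B alloc t.val p.2) ≤
      min (b t p.1) (budgetRem m b B alloc t.val p.1)

/-! In any feasible allocation the price of keyword `u` is at most the bid of a bidder other than
the top one (either the price-setter itself, or the winner if the price-setter is the top bidder),
hence at most `s u`. Conversely, a winner pays at most its own bid, i.e. at most `1/c` of its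
budget, so if only `c` keywords are allocated every budget keeps at least `1/c` of its initial
value and no bid is ever truncated: each auction earns exactly `s u`. The `c` keywords with the
largest `s u` carry at least the fraction `c/m` of the total. -/

open Finset

section Budget

variable {m : ℕ} {V : Type*}

def allocatedBefore (alloc : Fin m → Option (V × V)) (t : ℕ) : Finset (Fin m) :=
  {u | (u : ℕ) < t ∧ (alloc u).isSome}

lemma allocatedBefore_subset_succ (alloc : Fin m → Option (V × V)) (t : ℕ) :
    allocatedBefore alloc t ⊆ allocatedBefore alloc (t + 1) := by
  intro u
  simp only [allocatedBefore, mem_filter, mem_univ, true_and]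
  exact fun ⟨hu, hs⟩ => ⟨by omega, hs⟩

lemma card_allocatedBefore_succ {alloc : Fin m → Option (V × V)} {t : ℕ} (ht : t < m)
    {p : V × V} (hp : alloc ⟨t, ht⟩ = some p) :
    #(allocatedBefore alloc (t + 1)) = #(allocatedBefore alloc t) + 1 := by
  have hnew : allocatedBefore alloc (t + 1) = insert ⟨t, ht⟩ (allocatedBefore alloc t) := by
    ext u
    simp only [allocatedBefore, mem_insert, mem_filter, mem_univ, true_and, Fin.ext_iff]
    constructor
    · rintro ⟨hu, hs⟩
      rcases Nat.lt_succ_iff_lt_or_eq.1 hu with hu | hu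
      · exact Or.inr ⟨hu, hs⟩
      · exact Or.inl hu
    · rintro (hu | ⟨hu, hs⟩)
      · obtain rfl : u = ⟨t, ht⟩ := Fin.ext hu
        simp [hp]
      · exact ⟨by omega, hs⟩
  rw [hnew, card_insert_of_notMem (by simp [allocatedBefore])]

lemma card_allocatedBefore_lt {alloc : Fin m → Option (V × V)} {t : Fin m}
    (ht : (alloc t).isSome) : #(allocatedBefore alloc t) < #{u | (alloc u).isSome} := by
  refine card_lt_card ⟨fun u hu => ?_, fun h => ?_⟩
  · simp only [allocatedBefore, mem_filter, mem_univ, true_and] at hu ⊢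
    exact hu.2
  · simpa [allocatedBefore] using h (mem_filter.2 ⟨mem_univ t, ht⟩)

variable [DecidableEq V] (b : Fin m → V → ℝ) (B : V → ℝ) (alloc : Fin m → Option (V × V))

lemma sub_card_mul_le_budgetRem (δ : V → ℝ) (hδ : ∀ v, 0 ≤ δ v)
    (hpay : ∀ t p, alloc t = some p → b t p.2 ≤ δ p.1) (t : ℕ) (v : V) :
    B v - #(allocatedBefore alloc t) * δ v ≤ budgetRem m b B alloc t v := by
  induction t with
  | zero => simp [allocatedBefore, budgetRem]
  | succ t ih =>
    have hmono : (#(allocatedBefore alloc t) : ℝ) ≤ #(allocatedBefore alloc (t + 1)) := by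
      exact_mod_cast card_le_card (allocatedBefore_subset_succ alloc t)
    have hstay : B v - #(allocatedBefore alloc (t + 1)) * δ v ≤ budgetRem m b B alloc t v := by
      nlinarith [hδ v]
    rw [budgetRem]
    by_cases ht : t < m
    · simp only [dif_pos ht]
      rcases hp : alloc ⟨t, ht⟩ with _ | p
      · exact hstay
      · by_cases hv : v = p.1
        · simp only [if_pos hv]
          have hcharge : min (b ⟨t, ht⟩ p.2) (budgetRem m b B alloc t p.2) ≤ δ v :=
            (min_le_left _ _).trans (hv ▸ hpay _ _ hp)
          rw [card_allocatedBefore_succ ht hp]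
          push_cast
          linarith
        · simpa only [if_neg hv] using hstay
    · simpa only [dif_neg ht] using hstay

lemma bid_le_budgetRem_of_card_le {c : ℕ} (hnn : ∀ u v, 0 ≤ b u v)
    (hsmall : ∀ u v, (c : ℝ) * b u v ≤ B v)
    (hwin : ∀ t p, alloc t = some p → b t p.2 ≤ b t p.1)
    (hcard : #{u | (alloc u).isSome} ≤ c) {t : Fin m} (ht : (alloc t).isSome) (v : V) :
    b t v ≤ budgetRem m b B alloc t v := by
  have hbefore : #(allocatedBefore alloc t) + 1 ≤ c :=
    (card_allocatedBefore_lt ht).trans_le hcard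
  have hc : (0 : ℝ) < c := by exact_mod_cast (by omega : 0 < c)
  have hbid : ∀ u v, b u v ≤ B v / c := fun u v => (le_div_iff₀' hc).2 (hsmall u v)
  have hδ : ∀ v, 0 ≤ B v / c := fun v => (hnn t v).trans (hbid t v)
  have hcount : (#(allocatedBefore alloc t) : ℝ) ≤ c - 1 := by
    rw [le_sub_iff_add_le]
    exact_mod_cast hbefore
  calc b t v ≤ B v / c := hbid t v
    _ = B v - (c - 1) * (B v / c) := by field_simp; ring
    _ ≤ B v - #(allocatedBefore alloc t) * (B v / c) := by gcongr; exact hδ v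
    _ ≤ budgetRem m b B alloc t v :=
      sub_card_mul_le_budgetRem b B alloc _ hδ
        (fun t p hp => (hwin t p hp).trans (hbid t p.1)) t v

end Budget

section UpperBound

variable {m : ℕ} {V : Type*} [DecidableEq V] {b : Fin m → V → ℝ} {B : V → ℝ}

lemma price2PAA_le_of_feasible {alloc : Fin m → Option (V × V)}
    (hfeas : Feasible2PAA m b B alloc) {t : Fin m} {v₁ : V} {s : ℝ} (hs : 0 ≤ s)
    (hmax : ∀ w, w ≠ v₁ → b t w ≤ s) :
    price2PAA m b B alloc t ≤ s := by
  unfold price2PAA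
  rcases hp : alloc t with _ | p
  · exact hs
  · obtain ⟨hne, hcmp⟩ := hfeas t p hp
    by_cases h₂ : p.2 = v₁
    · calc _ ≤ min (b t p.1) (budgetRem m b B alloc t p.1) := hcmp
        _ ≤ b t p.1 := min_le_left _ _
        _ ≤ s := hmax p.1 (h₂ ▸ hne)
    · exact (min_le_left _ _).trans (hmax p.2 h₂)

lemma value2PAA_le_sum_of_feasible {alloc : Fin m → Option (V × V)}
    (hfeas : Feasible2PAA m b B alloc) {s : Fin m → ℝ} (hs : ∀ u, 0 ≤ s u)
    (hmax : ∀ u, ∃ v₁, ∀ w, w ≠ v₁ → b u w ≤ s u) :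
    value2PAA m b B alloc ≤ ∑ u, s u :=
  sum_le_sum fun u _ =>
    let ⟨_, hu⟩ := hmax u
    price2PAA_le_of_feasible hfeas (hs u) hu

end UpperBound

section SecondPriceOn

variable {m : ℕ} {V : Type*} {T : Finset (Fin m)} {v₁ v₂ : Fin m → V}

def secondPriceOn (T : Finset (Fin m)) (v₁ v₂ : Fin m → V) : Fin m → Option (V × V) :=
  fun t => if t ∈ T then some (v₁ t, v₂ t) else none

lemma secondPriceOn_eq_some {t : Fin m} {p : V × V} (hp : secondPriceOn T v₁ v₂ t = some p) :
    t ∈ T ∧ p = (v₁ t, v₂ t) := by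
  unfold secondPriceOn at hp
  split_ifs at hp with ht
  exact ⟨ht, (Option.some.inj hp).symm⟩

variable [DecidableEq V] {b : Fin m → V → ℝ} {B : V → ℝ} {c : ℕ}

lemma bid_le_budgetRem_secondPriceOn (hnn : ∀ u v, 0 ≤ b u v)
    (hsmall : ∀ u v, (c : ℝ) * b u v ≤ B v) (hT : #T ≤ c)
    (hle : ∀ t, b t (v₂ t) ≤ b t (v₁ t)) {t : Fin m} (ht : t ∈ T) (v : V) :
    b t v ≤ budgetRem m b B (secondPriceOn T v₁ v₂) t v := by
  refine bid_le_budgetRem_of_card_le b B _ hnn hsmall (fun t p hp => ?_) ?_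
    (by simp [secondPriceOn, ht]) v
  · obtain ⟨-, rfl⟩ := secondPriceOn_eq_some hp
    exact hle t
  · convert hT using 2
    ext u
    simp [secondPriceOn]

lemma feasible2PAA_secondPriceOn (hnn : ∀ u v, 0 ≤ b u v)
    (hsmall : ∀ u v, (c : ℝ) * b u v ≤ B v) (hT : #T ≤ c) (hne : ∀ t, v₁ t ≠ v₂ t)
    (hle : ∀ t, b t (v₂ t) ≤ b t (v₁ t)) :
    Feasible2PAA m b B (secondPriceOn T v₁ v₂) := by
  intro t p hp
  obtain ⟨ht, rfl⟩ := secondPriceOn_eq_some hp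
  have hbudget := bid_le_budgetRem_secondPriceOn hnn hsmall hT hle ht
  rw [min_eq_left (hbudget _), min_eq_left (hbudget _)]
  exact ⟨hne t, hle t⟩

lemma value2PAA_secondPriceOn (hnn : ∀ u v, 0 ≤ b u v)
    (hsmall : ∀ u v, (c : ℝ) * b u v ≤ B v) (hT : #T ≤ c)
    (hle : ∀ t, b t (v₂ t) ≤ b t (v₁ t)) :
    value2PAA m b B (secondPriceOn T v₁ v₂) = ∑ t ∈ T, b t (v₂ t) := by
  have hprice : ∀ t, price2PAA m b B (secondPriceOn T v₁ v₂) t =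
      if t ∈ T then b t (v₂ t) else 0 := by
    intro t
    by_cases ht : t ∈ T
    · simp only [price2PAA, secondPriceOn, if_pos ht]
      exact min_eq_left (bid_le_budgetRem_secondPriceOn hnn hsmall hT hle ht _)
    · simp [price2PAA, secondPriceOn, ht]
  simp only [value2PAA, hprice, sum_ite_mem, univ_inter]

end SecondPriceOn

section TopValues

variable {ι : Type*} [Fintype ι]

/-- A `c`-element set of maximal `f`-sum dominates its complement, by the exchange argument. -/
lemma exists_card_eq_forall_notMem_le (f : ι → ℝ) {c : ℕ} (hc : c ≤ Fintype.card ι) :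
    ∃ T : Finset ι, #T = c ∧ ∀ x ∈ T, ∀ y ∉ T, f y ≤ f x := by
  classical
  obtain ⟨T, hTmem, hTmax⟩ := exists_max_image (powersetCard c univ) (fun T => ∑ u ∈ T, f u)
    (powersetCard_nonempty.2 (by simpa using hc))
  have hTc : #T = c := (mem_powersetCard.1 hTmem).2
  refine ⟨T, hTc, fun x hx y hy => ?_⟩
  have hc₁ : 1 ≤ c := hTc ▸ card_pos.2 ⟨x, hx⟩
  have hyx : y ∉ T.erase x := fun h => hy (mem_of_mem_erase h)
  have hswap := hTmax (insert y (T.erase x)) <| mem_powersetCard.2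
    ⟨subset_univ _, by rw [card_insert_of_notMem hyx, card_erase_of_mem hx, hTc]; omega⟩
  rw [sum_insert hyx, sum_erase_eq_sub hx] at hswap
  linarith

lemma card_div_mul_sum_le_sum_of_forall_notMem_le (f : ι → ℝ) (T : Finset ι)
    (hdom : ∀ x ∈ T, ∀ y ∉ T, f y ≤ f x) :
    (#T / Fintype.card ι : ℝ) * ∑ u, f u ≤ ∑ u ∈ T, f u := by
  classical
  rcases (Fintype.card ι).eq_zero_or_pos with hι | hι
  · have : IsEmpty ι := Fintype.card_eq_zero_iff.1 hι
    simp [eq_empty_of_isEmpty T]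
  have hout : ∀ y ∈ Tᶜ, #T * f y ≤ ∑ u ∈ T, f u := fun y hy => by
    simpa using card_nsmul_le_sum T f (f y) fun x hx => hdom x hx y (mem_compl.1 hy)
  have hcompl : #T * ∑ u ∈ Tᶜ, f u ≤ #Tᶜ * ∑ u ∈ T, f u := by
    rw [mul_sum, ← nsmul_eq_mul]
    exact sum_le_card_nsmul _ _ _ hout
  have hcardc : (#Tᶜ : ℝ) = Fintype.card ι - #T := by
    rw [card_compl, Nat.cast_sub (card_le_univ T)]
  rw [hcardc] at hcompl
  rw [div_mul_eq_mul_div, div_le_iff₀ (by exact_mod_cast hι), ← sum_add_sum_compl T f]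
  linarith

end TopValues

theorem stmt18_general (c m : ℕ) (hcm : c ≤ m) {V : Type*}
    [DecidableEq V] (b : Fin m → V → ℝ) (B : V → ℝ)
    (hnn : ∀ u v, 0 ≤ b u v) (hsmall : ∀ u v, (c : ℝ) * b u v ≤ B v)
    (s : Fin m → ℝ)
    (hs : ∀ u : Fin m, ∃ v1 v2 : V, v1 ≠ v2 ∧ b u v2 ≤ b u v1 ∧ b u v2 = s u ∧
      ∀ w : V, w ≠ v1 → b u w ≤ s u) :
    (∀ alloc : Fin m → Option (V × V), Feasible2PAA m b B alloc →
      value2PAA m b B alloc ≤ ∑ u : Fin m, s u) ∧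
    (∃ alloc : Fin m → Option (V × V), Feasible2PAA m b B alloc ∧
      value2PAA m b B alloc ≥ ((c : ℝ) / m) * ∑ u : Fin m, s u) := by
  choose v₁ v₂ hne hle hsv hmax using hs
  have hs₀ : ∀ u, 0 ≤ s u := fun u => hsv u ▸ hnn u (v₂ u)
  refine ⟨fun alloc hfeas => value2PAA_le_sum_of_feasible hfeas hs₀ fun u => ⟨v₁ u, hmax u⟩, ?_⟩
  obtain ⟨T, hTc, hdom⟩ := exists_card_eq_forall_notMem_le s (by simpa using hcm)
  refine ⟨secondPriceOn T v₁ v₂, feasible2PAA_secondPriceOn hnn hsmall hTc.le hne hle, ?_⟩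
  calc ((c : ℝ) / m) * ∑ u, s u ≤ ∑ u ∈ T, s u := by
        simpa [hTc] using card_div_mul_sum_le_sum_of_forall_notMem_le s T hdom
    _ = value2PAA m b B (secondPriceOn T v₁ v₂) := by
        rw [value2PAA_secondPriceOn hnn hsmall hTc.le hle]
        exact sum_congr rfl fun u _ => (hsv u).symm

/-- in a 2PAA instance with `m` keywords where every bid is at most `1/c`
of the bidder's budget, with `s u` the second-highest bid on keyword `u`: every feasible
allocation has value at most `∑ u, s u`, and running second-price auctions (with the
top two bidders) on the `c` keywords with the largest `s u` gives a feasible allocation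
of value at least `(c/m) ∑ u, s u`; hence this is an `m/c`-approximation. -/
theorem stmt18 (c m : ℕ) (hc : 1 ≤ c) (hcm : c ≤ m) {V : Type*} [Fintype V]
    [DecidableEq V] (b : Fin m → V → ℝ) (B : V → ℝ)
    (hnn : ∀ u v, 0 ≤ b u v) (hsmall : ∀ u v, (c : ℝ) * b u v ≤ B v)
    (s : Fin m → ℝ)
    (hs : ∀ u : Fin m, ∃ v1 v2 : V, v1 ≠ v2 ∧ b u v2 ≤ b u v1 ∧ b u v2 = s u ∧
      ∀ w : V, w ≠ v1 → b u w ≤ s u) :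
    (∀ alloc : Fin m → Option (V × V), Feasible2PAA m b B alloc →
      value2PAA m b B alloc ≤ ∑ u : Fin m, s u) ∧
    (∃ alloc : Fin m → Option (V × V), Feasible2PAA m b B alloc ∧
      value2PAA m b B alloc ≥ ((c : ℝ) / m) * ∑ u : Fin m, s u) :=
  stmt18_general c m hcm b B hnn hsmall s hs
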